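/- Let n ≥ 2, f ≥ 1, D ⊆ {1,…,n−1}, and let λ ∈ ℤ^n satisfy (H_f). The following are equivalent: (a) there exists a D-admissible w ∈ S_n with w·λ'_D dominant and supp(fθ − w·λ'_D) ⊆ w(D); (b) there exists a D-admissible σ ∈ S_n with λ'_D = (f·(σ⁻¹·θ))'_D, i.e. the W_D-average of λ equals the W_D-average of f·σ⁻¹·θ. Moreover, if (a) holds for w, then (b) holds with σ = w. (Paper: Proposition 'minimal' in §2.2, for G = GL_n: the isotypic components C_P with P(C_P) = {}^w P are exactly those attached to f·w⁻¹(θ_G) restricted to Z_{M_P}.) -/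

import Mathlib

/-!
Setup (§2.2 of the paper, for `G = GL_n`): the symmetric group `S_n` acts on `ℚ^n` by
permuting coordinates, `(w • v) k = v (w⁻¹ k)`.  Coordinates are indexed by `Fin n`
(`0`-based), so the simple roots are `α i = e i − e (i+1)` for `i ∈ {0, …, n−2}`
(the paper's `α_{i+1}`), subsets of simple roots are subsets of
`{0, …, n−2} = Finset.range (n−1)`, and `θ = (n−1, n−2, …, 1, 0)`.
-/

namespace BHHMS

/-- The standard basis vector `e i` of `ℚ^n`. -/
def stde (n i : ℕ) : Fin n → ℚ := fun k => if (k : ℕ) = i then 1 else 0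

/-- The simple root `α i = e i − e (i+1)`, for `i ∈ {0, …, n−2}`. -/
def simpleRoot (n i : ℕ) : Fin n → ℚ := stde n i - stde n (i + 1)

/-- The action of `S_n` on `ℚ^n` permuting the coordinates: `(w • v) k = v (w⁻¹ k)`. -/
def permAct (n : ℕ) (w : Equiv.Perm (Fin n)) (v : Fin n → ℚ) : Fin n → ℚ :=
  fun k => v (w⁻¹ k)

/-- `v ≤ v'` iff `v' − v` is a `ℚ≥0`-linear combination of the simple roots. -/
def rootLE (n : ℕ) (v v' : Fin n → ℚ) : Prop :=
  ∃ c : ℕ → ℚ, (∀ i, 0 ≤ c i) ∧ v' - v = ∑ i ∈ Finset.range (n - 1), c i • simpleRoot n i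

/-- `v` is dominant iff `v 0 ≥ v 1 ≥ … ≥ v (n−1)`. -/
def Dominant (n : ℕ) (v : Fin n → ℚ) : Prop := ∀ i j : Fin n, i ≤ j → v j ≤ v i

/-- The adjacent transposition `s i = (i, i+1)` (junk value `1` if `i + 1 ≥ n`). -/
def adjSwap (n i : ℕ) : Equiv.Perm (Fin n) :=
  if h : i + 1 < n then Equiv.swap ⟨i, Nat.lt_of_succ_lt h⟩ ⟨i + 1, h⟩ else 1

/-- The subgroup `W_D ⊆ S_n` generated by the `s i` for `i ∈ D`. -/
def WD (n : ℕ) (D : Finset ℕ) : Subgroup (Equiv.Perm (Fin n)) :=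
  Subgroup.closure (adjSwap n '' ↑D)

/-- `Σ_{w ∈ W_D} w·v`. -/
noncomputable def WDsum (n : ℕ) (D : Finset ℕ) (v : Fin n → ℚ) : Fin n → ℚ :=
  ∑ᶠ w ∈ WD n D, permAct n w v

/-- The `W_D`-average `λ'_D = |W_D|⁻¹ Σ_{w ∈ W_D} w·λ`. -/
noncomputable def avg (n : ℕ) (D : Finset ℕ) (v : Fin n → ℚ) : Fin n → ℚ :=
  ((Nat.card ↥(WD n D) : ℚ))⁻¹ • WDsum n D v

/-- For `v` of coordinate sum `0`, writing `v = Σ_i c_i • α_i` one has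
`c_i = v 0 + ⋯ + v i`; then `supp v = {i : c_i ≠ 0}`. -/
def suppOf (n : ℕ) (v : Fin n → ℚ) : Finset ℕ :=
  (Finset.range (n - 1)).filter fun i => (∑ k : Fin n, if (k : ℕ) ≤ i then v k else 0) ≠ 0

/-- `w` is `D`-admissible iff `w (i+1) = w i + 1` for every `i ∈ D`. -/
def IsAdmissible (n : ℕ) (D : Finset ℕ) (w : Equiv.Perm (Fin n)) : Prop :=
  ∀ i ∈ D, ∀ h : i + 1 < n,
    ((w ⟨i + 1, h⟩ : Fin n) : ℕ) = ((w ⟨i, Nat.lt_of_succ_lt h⟩ : Fin n) : ℕ) + 1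

/-- The image `w(D) = {w i : i ∈ D}` as a subset of `ℕ`. -/
def permImage (n : ℕ) (w : Equiv.Perm (Fin n)) (D : Finset ℕ) : Finset ℕ :=
  D.image fun i => if h : i < n then ((w ⟨i, h⟩ : Fin n) : ℕ) else i

/-- `θ = (n−1, n−2, …, 1, 0)`. -/
def theta (n : ℕ) : Fin n → ℚ := fun k => (n : ℚ) - 1 - ((k : ℕ) : ℚ)

/-- A vector of `ℤ^n` seen in `ℚ^n`. -/
def ratVec (n : ℕ) (lam : Fin n → ℤ) : Fin n → ℚ := fun k => ((lam k : ℤ) : ℚ)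

/-- `λ ∈ ℤ^n` satisfies `(H_f)` iff `σ·λ ≤ fθ` for every `σ ∈ S_n`. -/
def SatisfiesHf (n f : ℕ) (lam : Fin n → ℤ) : Prop :=
  ∀ σ : Equiv.Perm (Fin n), rootLE n (permAct n σ (ratVec n lam)) ((f : ℚ) • theta n)

/-
Write `D' = w(D)`. For `D`-admissible `w`, conjugation by `w` carries `W_D` onto `W_{D'}`,
so `w·λ'_D = (w·λ)'_{D'}` is `W_{D'}`-invariant. Averaging over `W_{D'}` kills `α_i` for
`i ∈ D'` (since `s_i α_i = -α_i`) and preserves the partial sums `c_j = v_0 + ⋯ + v_j`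
for `j ∉ D'`, which `W_{D'}` leaves invariant.

(a) ⇒ (b): by `(H_f)` for `σ = 1`, `fθ - w·λ'_D` has coordinate sum `0`, so it equals
`Σ c_i α_i`, and the support condition says only `i ∈ D'` occur. Averaging over `W_{D'}`
gives `w·λ'_D = (fθ)'_{D'} = w·(f·w⁻¹θ)'_D`.

(b) ⇒ (a): `w·λ'_D = (fθ)'_{D'}` is dominant, being an average of the dominant `fθ` over a
group generated by adjacent transpositions, and its partial sums `c_j` agree with those of
`fθ` for `j ∉ D'`.
-/

noncomputable instance (n : ℕ) (D : Finset ℕ) : Fintype ↥(WD n D) := Fintype.ofFinite _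

variable {n : ℕ}

section PermAct

lemma permAct_mul (u w : Equiv.Perm (Fin n)) (v : Fin n → ℚ) :
    permAct n (u * w) v = permAct n u (permAct n w v) := by
  funext k; simp [permAct, mul_inv_rev]

lemma permAct_one (v : Fin n → ℚ) : permAct n 1 v = v := rfl

lemma permAct_inv_permAct (w : Equiv.Perm (Fin n)) (v : Fin n → ℚ) :
    permAct n w⁻¹ (permAct n w v) = v := by
  rw [← permAct_mul, inv_mul_cancel, permAct_one]

lemma permAct_permAct_inv (w : Equiv.Perm (Fin n)) (v : Fin n → ℚ) :
    permAct n w (permAct n w⁻¹ v) = v := by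
  rw [← permAct_mul, mul_inv_cancel, permAct_one]

lemma permAct_smul (w : Equiv.Perm (Fin n)) (c : ℚ) (v : Fin n → ℚ) :
    permAct n w (c • v) = c • permAct n w v := rfl

lemma permAct_sub (w : Equiv.Perm (Fin n)) (v v' : Fin n → ℚ) :
    permAct n w (v - v') = permAct n w v - permAct n w v' := rfl

lemma permAct_neg (w : Equiv.Perm (Fin n)) (v : Fin n → ℚ) :
    permAct n w (-v) = -permAct n w v := rfl

lemma permAct_sum {ι : Type*} (s : Finset ι) (w : Equiv.Perm (Fin n)) (F : ι → Fin n → ℚ) :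
    permAct n w (∑ i ∈ s, F i) = ∑ i ∈ s, permAct n w (F i) := by
  funext k; simp [permAct]

lemma sum_permAct (w : Equiv.Perm (Fin n)) (v : Fin n → ℚ) :
    ∑ k, permAct n w v k = ∑ k, v k :=
  Equiv.sum_comp w⁻¹ v

end PermAct

section Average

variable {D : Finset ℕ}

lemma adjSwap_mem_WD {i : ℕ} (hi : i ∈ D) : adjSwap n i ∈ WD n D :=
  Subgroup.subset_closure ⟨i, hi, rfl⟩

lemma avg_eq_sum (D : Finset ℕ) (v : Fin n → ℚ) :
    avg n D v = (Nat.card (WD n D) : ℚ)⁻¹ • ∑ u : WD n D, permAct n u v :=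
  congrArg _ <| (finsum_set_coe_eq_finsum_mem (WD n D : Set (Equiv.Perm (Fin n)))).symm.trans
    (finsum_eq_sum_of_fintype fun u : WD n D => permAct n u v)

lemma map_avg_eq_of_forall {M : Type*} [AddCommGroup M] [Module ℚ M]
    (φ : (Fin n → ℚ) →ₗ[ℚ] M) {v : Fin n → ℚ} {x : M}
    (h : ∀ u ∈ WD n D, φ (permAct n u v) = x) : φ (avg n D v) = x := by
  have hcard : (Nat.card (WD n D) : ℚ) ≠ 0 := Nat.cast_ne_zero.mpr Nat.card_pos.ne'
  simp only [avg_eq_sum, map_smul, map_sum, fun u : WD n D => h u u.2, Finset.sum_const,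
    Finset.card_univ, ← Nat.card_eq_fintype_card, ← Nat.cast_smul_eq_nsmul ℚ, smul_smul,
    inv_mul_cancel₀ hcard, one_smul]

lemma avg_eq_self_of_forall_permAct_eq {v : Fin n → ℚ}
    (hv : ∀ u ∈ WD n D, permAct n u v = v) : avg n D v = v :=
  map_avg_eq_of_forall LinearMap.id hv

lemma map_avg {M : Type*} [AddCommGroup M] [Module ℚ M] (φ : (Fin n → ℚ) →ₗ[ℚ] M)
    (hφ : ∀ u ∈ WD n D, ∀ v, φ (permAct n u v) = φ v) (v : Fin n → ℚ) :
    φ (avg n D v) = φ v :=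
  map_avg_eq_of_forall φ fun u hu => hφ u hu v

lemma permAct_avg {u : Equiv.Perm (Fin n)} (hu : u ∈ WD n D) (v : Fin n → ℚ) :
    permAct n u (avg n D v) = avg n D v := by
  rw [avg_eq_sum, permAct_smul, permAct_sum]
  simp only [← permAct_mul]
  congr 1
  exact Equiv.sum_comp (Equiv.mulLeft (⟨u, hu⟩ : WD n D)) (fun w => permAct n w v)

lemma avg_permAct {u : Equiv.Perm (Fin n)} (hu : u ∈ WD n D) (v : Fin n → ℚ) :
    avg n D (permAct n u v) = avg n D v := by
  simp only [avg_eq_sum, ← permAct_mul]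
  congr 1
  exact Equiv.sum_comp (Equiv.mulRight (⟨u, hu⟩ : WD n D)) (fun w => permAct n w v)

lemma avg_avg (v : Fin n → ℚ) : avg n D (avg n D v) = avg n D v :=
  avg_eq_self_of_forall_permAct_eq fun _ hu => permAct_avg hu v

lemma avg_sum {ι : Type*} (s : Finset ι) (F : ι → Fin n → ℚ) :
    avg n D (∑ i ∈ s, F i) = ∑ i ∈ s, avg n D (F i) := by
  simp only [avg_eq_sum, permAct_sum, ← Finset.smul_sum]
  rw [Finset.sum_comm]

lemma avg_sub (v v' : Fin n → ℚ) : avg n D (v - v') = avg n D v - avg n D v' := by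
  simp only [avg_eq_sum, permAct_sub, Finset.sum_sub_distrib, smul_sub]

lemma avg_neg (v : Fin n → ℚ) : avg n D (-v) = -avg n D v := by
  simp only [avg_eq_sum, permAct_neg, Finset.sum_neg_distrib, smul_neg]

lemma avg_smul (c : ℚ) (v : Fin n → ℚ) : avg n D (c • v) = c • avg n D v := by
  simp only [avg_eq_sum, permAct_smul, ← Finset.smul_sum, smul_comm c]

lemma permAct_adjSwap_simpleRoot {i : ℕ} (h : i + 1 < n) :
    permAct n (adjSwap n i) (simpleRoot n i) = -simpleRoot n i := by
  funext k
  simp only [permAct, adjSwap, dif_pos h, Equiv.swap_inv, simpleRoot, stde, Pi.sub_apply,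
    Pi.neg_apply, Equiv.swap_apply_def, Fin.ext_iff]
  split_ifs <;> simp_all

lemma avg_simpleRoot {i : ℕ} (hi : i ∈ D) (h : i + 1 < n) :
    avg n D (simpleRoot n i) = 0 := by
  have := avg_permAct (adjSwap_mem_WD hi) (simpleRoot n i)
  rw [permAct_adjSwap_simpleRoot h, avg_neg] at this
  exact self_eq_neg.mp this.symm

end Average

section PartialSum

def partialSum (n j : ℕ) : (Fin n → ℚ) →ₗ[ℚ] ℚ where
  toFun v := ∑ k : Fin n, if (k : ℕ) ≤ j then v k else 0
  map_add' v v' := by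
    simp only [Pi.add_apply, ← Finset.sum_add_distrib, ite_add_ite, add_zero]
  map_smul' c v := by
    simp only [Pi.smul_apply, smul_eq_mul, RingHom.id_apply, Finset.mul_sum, mul_ite, mul_zero]

variable {j : ℕ}

lemma partialSum_apply (v : Fin n → ℚ) :
    partialSum n j v = ∑ k : Fin n, if (k : ℕ) ≤ j then v k else 0 := rfl

lemma mem_suppOf {v : Fin n → ℚ} : j ∈ suppOf n v ↔ j < n - 1 ∧ partialSum n j v ≠ 0 := by
  simp [suppOf, partialSum_apply]

lemma partialSum_of_le (h : n ≤ j + 1) (v : Fin n → ℚ) : partialSum n j v = ∑ k, v k := by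
  rw [partialSum_apply]
  exact Finset.sum_congr rfl fun k _ => if_pos (by omega)

lemma partialSum_stde {i : ℕ} (hi : i < n) :
    partialSum n j (stde n i) = if i ≤ j then 1 else 0 := by
  rw [partialSum_apply, Fintype.sum_eq_single ⟨i, hi⟩ fun k hk => ?_]
  · simp [stde]
  · simp [stde, Fin.ext_iff.not.mp hk]

lemma partialSum_simpleRoot {i : ℕ} (h : i + 1 < n) :
    partialSum n j (simpleRoot n i) = if i = j then 1 else 0 := by
  rw [simpleRoot, map_sub, partialSum_stde (by omega), partialSum_stde h]
  split_ifs <;> first | omega | norm_num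

lemma eq_zero_of_partialSum_eq_zero {v : Fin n → ℚ} (h : ∀ j < n, partialSum n j v = 0) :
    v = 0 := by
  funext ⟨k, hk⟩
  induction k using Nat.strong_induction_on with
  | _ k ih =>
    have hk' := h k hk
    rw [partialSum_apply, Fintype.sum_eq_single ⟨k, hk⟩ fun m hm => ?_] at hk'
    · simpa using hk'
    · split_ifs with hmk
      · exact ih m (lt_of_le_of_ne hmk (Fin.val_ne_of_ne hm)) m.2
      · rfl

lemma eq_sum_partialSum_smul_simpleRoot {v : Fin n → ℚ} (hv : ∑ k, v k = 0) :
    v = ∑ i ∈ Finset.range (n - 1), partialSum n i v • simpleRoot n i := by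
  rw [← sub_eq_zero]
  refine eq_zero_of_partialSum_eq_zero fun j hj => ?_
  have hcoeff : ∀ i ∈ Finset.range (n - 1),
      partialSum n j (partialSum n i v • simpleRoot n i) =
        if j = i then partialSum n i v else 0 :=
    fun i hi => by
      rw [map_smul, partialSum_simpleRoot (by simp at hi; omega), smul_eq_mul, mul_ite, mul_one,
        mul_zero, eq_comm]
      exact if_congr eq_comm rfl rfl
  rw [map_sub, map_sum, Finset.sum_congr rfl hcoeff, Finset.sum_ite_eq]
  split_ifs with hj'
  · exact sub_self _
  · rw [partialSum_of_le (by simp at hj'; omega), hv, sub_zero]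

lemma sum_eq_of_rootLE {v v' : Fin n → ℚ} (h : rootLE n v v') : ∑ k, v' k = ∑ k, v k := by
  obtain ⟨c, -, hc⟩ := h
  have hsum := congrArg (partialSum n (n - 1)) hc
  rw [map_sub, map_sum, partialSum_of_le (by omega), partialSum_of_le (by omega)] at hsum
  rw [← sub_eq_zero, hsum]
  refine Finset.sum_eq_zero fun i hi => ?_
  rw [map_smul, partialSum_simpleRoot (by simp at hi; omega), if_neg (by simp at hi; omega),
    smul_zero]

end PartialSum

section Invariance

variable {D : Finset ℕ} {j : ℕ}

lemma val_le_iff_of_mem_WD (hj : j ∉ D) {u : Equiv.Perm (Fin n)} (hu : u ∈ WD n D)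
    (k : Fin n) : (u k : ℕ) ≤ j ↔ (k : ℕ) ≤ j := by
  induction hu using Subgroup.closure_induction generalizing k with
  | mem x hx =>
    obtain ⟨i, hi, rfl⟩ := hx
    have hij : i ≠ j := fun h => hj (h ▸ hi)
    unfold adjSwap
    split_ifs
    · rw [Equiv.swap_apply_def]
      split_ifs <;> simp_all [Fin.ext_iff] <;> omega
    · rfl
  | one => rfl
  | mul x y _ _ hx hy => exact (hx (y k)).trans (hy k)
  | inv x _ hx => simpa using (hx (x⁻¹ k)).symm

lemma partialSum_permAct (hj : j ∉ D) {u : Equiv.Perm (Fin n)} (hu : u ∈ WD n D)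
    (v : Fin n → ℚ) : partialSum n j (permAct n u v) = partialSum n j v := by
  simp only [partialSum_apply, permAct]
  refine (Equiv.sum_comp u _).symm.trans (Finset.sum_congr rfl fun k _ => ?_)
  simp only [Equiv.Perm.coe_inv, Equiv.symm_apply_apply, val_le_iff_of_mem_WD hj hu]

lemma partialSum_avg (hj : j ∉ D) (v : Fin n → ℚ) :
    partialSum n j (avg n D v) = partialSum n j v :=
  map_avg _ (fun _ hu => partialSum_permAct hj hu) v

lemma sum_avg (hD : D ⊆ Finset.range (n - 1)) (v : Fin n → ℚ) :
    ∑ k, avg n D v k = ∑ k, v k := by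
  have hn : n - 1 ∉ D := fun h => by simpa using hD h
  rw [← partialSum_of_le (j := n - 1) (by omega), partialSum_avg hn,
    partialSum_of_le (by omega)]

lemma avg_eq_zero_of_suppOf_subset {v : Fin n → ℚ} (hv : ∑ k, v k = 0)
    (h : suppOf n v ⊆ D) : avg n D v = 0 := by
  rw [eq_sum_partialSum_smul_simpleRoot hv, avg_sum]
  refine Finset.sum_eq_zero fun i hi => ?_
  rw [avg_smul]
  by_cases hc : partialSum n i v = 0
  · rw [hc, zero_smul]
  · have hi' : i < n - 1 := Finset.mem_range.mp hi
    rw [avg_simpleRoot (h (mem_suppOf.mpr ⟨hi', hc⟩)) (by omega), smul_zero]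

lemma suppOf_sub_avg_subset (v : Fin n → ℚ) : suppOf n (v - avg n D v) ⊆ D := by
  intro j hj
  by_contra hjD
  exact (mem_suppOf.mp hj).2 (by rw [map_sub, partialSum_avg hjD, sub_self])

end Invariance

section Conjugation

variable {D : Finset ℕ} {w : Equiv.Perm (Fin n)}

lemma conj_adjSwap {i : ℕ} (h : i + 1 < n)
    (hw : (w ⟨i + 1, h⟩ : ℕ) = (w ⟨i, Nat.lt_of_succ_lt h⟩ : ℕ) + 1) :
    w * adjSwap n i * w⁻¹ = adjSwap n (w ⟨i, Nat.lt_of_succ_lt h⟩) := by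
  have hlt : (w ⟨i, Nat.lt_of_succ_lt h⟩ : ℕ) + 1 < n := hw ▸ (w ⟨i + 1, h⟩).isLt
  rw [adjSwap, dif_pos h, adjSwap, dif_pos hlt, ← Equiv.swap_apply_apply]
  congr 1
  exact Fin.ext hw

lemma map_conj_WD (hD : D ⊆ Finset.range (n - 1)) (hw : IsAdmissible n D w) :
    (WD n D).map (MulAut.conj w).toMonoidHom = WD n (permImage n w D) := by
  rw [WD, MonoidHom.map_closure, WD, permImage, Finset.coe_image, ← Set.image_comp,
    ← Set.image_comp]
  refine congrArg _ (Set.image_congr fun i hi => ?_)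
  have hi' : i + 1 < n := by have := hD hi; simp at this; omega
  simpa [dif_pos (Nat.lt_of_succ_lt hi')] using conj_adjSwap hi' (hw i hi hi')

lemma avg_permAct_of_isAdmissible (hD : D ⊆ Finset.range (n - 1)) (hw : IsAdmissible n D w)
    (v : Fin n → ℚ) :
    avg n (permImage n w D) (permAct n w v) = permAct n w (avg n D v) := by
  let e : WD n D ≃* WD n (permImage n w D) :=
    ((WD n D).equivMapOfInjective _ (MulAut.conj w).injective).trans
      (MulEquiv.subgroupCongr (map_conj_WD hD hw))
  rw [avg_eq_sum, avg_eq_sum, permAct_smul, permAct_sum, Nat.card_congr e.toEquiv]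
  refine congrArg _ (Fintype.sum_equiv e.toEquiv _ _ fun u => ?_).symm
  change permAct n w (permAct n u v) = permAct n (w * u * w⁻¹) (permAct n w v)
  rw [← permAct_mul, ← permAct_mul, inv_mul_cancel_right]

end Conjugation

section Dominance

lemma dominant_of_succ_le {v : Fin n → ℚ}
    (hv : ∀ m (h : m + 1 < n), v ⟨m + 1, h⟩ ≤ v ⟨m, Nat.lt_of_succ_lt h⟩) : Dominant n v := by
  cases n with
  | zero => exact fun i => i.elim0
  | succ m => exact Fin.antitone_iff_succ_le.mpr fun i => hv i (by omega)

lemma dominant_smul_theta (f : ℕ) : Dominant n ((f : ℚ) • theta n) := by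
  intro i j hij
  simp only [Pi.smul_apply, theta, smul_eq_mul]
  have : ((i : ℕ) : ℚ) ≤ (j : ℕ) := by exact_mod_cast hij
  nlinarith [(Nat.cast_nonneg f : (0 : ℚ) ≤ f)]

lemma dominant_avg {D : Finset ℕ} {v : Fin n → ℚ} (hv : Dominant n v) :
    Dominant n (avg n D v) := by
  refine dominant_of_succ_le fun m h => ?_
  by_cases hm : m ∈ D
  · have hswap : (adjSwap n m)⁻¹ ⟨m + 1, h⟩ = ⟨m, Nat.lt_of_succ_lt h⟩ := by
      rw [adjSwap, dif_pos h, Equiv.swap_inv, Equiv.swap_apply_right]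
    have := congrFun (permAct_avg (adjSwap_mem_WD hm) v) ⟨m + 1, h⟩
    rw [permAct, hswap] at this
    exact this.ge
  · simp only [avg_eq_sum, Pi.smul_apply, Finset.sum_apply, smul_eq_mul]
    refine mul_le_mul_of_nonneg_left (Finset.sum_le_sum fun u _ => hv _ _ ?_) (by positivity)
    have hu := (WD n D).inv_mem u.2
    have h₁ := (val_le_iff_of_mem_WD hm hu ⟨m, Nat.lt_of_succ_lt h⟩).mpr le_rfl
    have h₂ := (val_le_iff_of_mem_WD hm hu ⟨m + 1, h⟩).not.mpr (by simp)
    rw [Fin.le_def]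
    omega

end Dominance

section Minimal

variable {D : Finset ℕ} {w : Equiv.Perm (Fin n)}

lemma permAct_avg_permAct_inv (hD : D ⊆ Finset.range (n - 1)) (hw : IsAdmissible n D w)
    (t : Fin n → ℚ) :
    permAct n w (avg n D (permAct n w⁻¹ t)) = avg n (permImage n w D) t := by
  rw [← avg_permAct_of_isAdmissible hD hw, permAct_permAct_inv]

lemma avg_eq_avg_permAct_inv_of_suppOf_subset (hD : D ⊆ Finset.range (n - 1))
    (hw : IsAdmissible n D w) {v t : Fin n → ℚ} (hsum : ∑ k, v k = ∑ k, t k)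
    (hsupp : suppOf n (t - permAct n w (avg n D v)) ⊆ permImage n w D) :
    avg n D v = avg n D (permAct n w⁻¹ t) := by
  have hμ : permAct n w (avg n D v) = avg n (permImage n w D) (permAct n w v) :=
    (avg_permAct_of_isAdmissible hD hw v).symm
  have hsum₀ : ∑ k, (t - permAct n w (avg n D v)) k = 0 := by
    simp only [Pi.sub_apply, Finset.sum_sub_distrib, sum_permAct, sum_avg hD, hsum, sub_self]
  have hzero := avg_eq_zero_of_suppOf_subset hsum₀ hsupp
  rw [avg_sub, sub_eq_zero, hμ, avg_avg, ← hμ, ← permAct_avg_permAct_inv hD hw] at hzero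
  simpa only [permAct_inv_permAct] using congrArg (permAct n w⁻¹) hzero.symm

lemma dominant_and_suppOf_subset_of_avg_eq (hD : D ⊆ Finset.range (n - 1))
    (hw : IsAdmissible n D w) {v t : Fin n → ℚ} (ht : Dominant n t)
    (h : avg n D v = avg n D (permAct n w⁻¹ t)) :
    Dominant n (permAct n w (avg n D v)) ∧
      suppOf n (t - permAct n w (avg n D v)) ⊆ permImage n w D := by
  rw [h, permAct_avg_permAct_inv hD hw]
  exact ⟨dominant_avg ht, suppOf_sub_avg_subset t⟩

end Minimal

theorem statement7_general (n f : ℕ) (D : Finset ℕ)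
    (hD : D ⊆ Finset.range (n - 1)) (lam : Fin n → ℤ) (hlam : SatisfiesHf n f lam) :
    ((∃ w : Equiv.Perm (Fin n), IsAdmissible n D w ∧
        Dominant n (permAct n w (avg n D (ratVec n lam))) ∧
        suppOf n ((f : ℚ) • theta n - permAct n w (avg n D (ratVec n lam)))
          ⊆ permImage n w D)
      ↔ (∃ σ : Equiv.Perm (Fin n), IsAdmissible n D σ ∧
          avg n D (ratVec n lam) = avg n D ((f : ℚ) • permAct n σ⁻¹ (theta n)))) ∧
    (∀ w : Equiv.Perm (Fin n), IsAdmissible n D w →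
      Dominant n (permAct n w (avg n D (ratVec n lam))) →
      suppOf n ((f : ℚ) • theta n - permAct n w (avg n D (ratVec n lam))) ⊆ permImage n w D →
      avg n D (ratVec n lam) = avg n D ((f : ℚ) • permAct n w⁻¹ (theta n))) := by
  simp only [← permAct_smul]
  have hsum : ∑ k, ratVec n lam k = ∑ k, ((f : ℚ) • theta n) k :=
    (sum_eq_of_rootLE (hlam 1)).symm
  have forward := fun w (hw : IsAdmissible n D w) =>
    avg_eq_avg_permAct_inv_of_suppOf_subset hD hw hsum
  refine ⟨⟨fun ⟨w, hw, _, hsupp⟩ => ⟨w, hw, forward w hw hsupp⟩, fun ⟨σ, hσ, h⟩ => ?_⟩,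
    fun w hw _ hsupp => forward w hw hsupp⟩
  exact ⟨σ, hσ, dominant_and_suppOf_subset_of_avg_eq hD hσ (dominant_smul_theta f) h⟩

/-- Proposition `minimal`, §2.2, for `G = GL_n`.  The following are
equivalent: (a) there is a `D`-admissible `w` with `w·λ'_D` dominant and
`supp (fθ − w·λ'_D) ⊆ w(D)`; (b) there is a `D`-admissible `σ` with
`λ'_D = (f·(σ⁻¹·θ))'_D`.  Moreover if (a) holds for `w` then (b) holds with `σ = w`. -/
theorem statement7 (n f : ℕ) (hn : 2 ≤ n) (hf : 1 ≤ f) (D : Finset ℕ)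
    (hD : D ⊆ Finset.range (n - 1)) (lam : Fin n → ℤ) (hlam : SatisfiesHf n f lam) :
    ((∃ w : Equiv.Perm (Fin n), IsAdmissible n D w ∧
        Dominant n (permAct n w (avg n D (ratVec n lam))) ∧
        suppOf n ((f : ℚ) • theta n - permAct n w (avg n D (ratVec n lam)))
          ⊆ permImage n w D)
      ↔ (∃ σ : Equiv.Perm (Fin n), IsAdmissible n D σ ∧
          avg n D (ratVec n lam) = avg n D ((f : ℚ) • permAct n σ⁻¹ (theta n)))) ∧
    (∀ w : Equiv.Perm (Fin n), IsAdmissible n D w →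
      Dominant n (permAct n w (avg n D (ratVec n lam))) →
      suppOf n ((f : ℚ) • theta n - permAct n w (avg n D (ratVec n lam))) ⊆ permImage n w D →
      avg n D (ratVec n lam) = avg n D ((f : ℚ) • permAct n w⁻¹ (theta n))) :=
  statement7_general n f D hD lam hlam

end BHHMS
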